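/- Let n ≥ 4 be an integer, m > 0 a real number, R₀ = (m/2)^(1/(n−2)), and let λ be a real number with 4λ + (n−2)(n−4) ≥ 0. Then for every continuously differentiable function φ : [R₀,∞) → ℝ with compact support, ∫_{R₀}^{∞} φ'(r)²·r^(n−2) dr ≥ ∫_{R₀}^{∞} ( V(r) − λ/r² )·φ(r)²·r^(n−2) dr, where V(r) = (m(n-1)/(2r^n))·(2r^(n-2)/(m + 2r^(n-2)))². -/

import Mathlib

/-!
If `v` is a supersolution of the Riccati inequality `v' + v² + (k/r) v + Q ≤ 0` on `[R₀, ∞)`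
(here `k = n - 2` and `Q = V - λ/r²`), then expanding `(φ' - v φ)² r^k ≥ 0` and integrating
the total derivative `(v φ² r^k)'` gives `∫ Q φ² r^k ≤ ∫ φ'² r^k`, up to the boundary term
`-v(R₀) φ(R₀)² R₀^k`, which is nonnegative when `v(R₀) ≤ 0`.

We take `v = c(t)/r` with `t = m/(m + 2 r^k)`, which decreases from `1/2` at the horizon to `0`.
Since `r t' = -k t (1 - t)` and `r² V = (k + 1) t (1 - t)`, the Riccati inequality becomes an
inequality between polynomials in `t` that does not involve `m`. The constant `c = -(k - 1)/2`
is the optimal Hardy exponent and leaves a margin of `1/4` over `k(k - 2)/4`; the correction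
`(k - 1) t/4 + 3 t²/2` absorbs the potential near the horizon while keeping `c(1/2) ≤ 0`.
-/

open Real MeasureTheory Set

/-- The potential `V(r) = (m (n-1)/(2 r^n)) (2 r^(n-2)/(m + 2 r^(n-2)))^2`. -/
noncomputable def schwarzPot (n : ℕ) (m : ℝ) : ℝ → ℝ :=
  fun r => m * ((n : ℝ) - 1) / (2 * r ^ n) * (2 * r ^ (n - 2) / (m + 2 * r ^ (n - 2))) ^ 2

theorem sq_mul_le_of_riccati {φ φ' v v' w w' Q : ℝ} (hw : 0 ≤ w)
    (hric : (v' + v ^ 2 + Q) * w + v * w' ≤ 0) :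
    (v' * φ ^ 2 + v * (2 * φ * φ')) * w + v * φ ^ 2 * w' ≤ φ' ^ 2 * w - Q * φ ^ 2 * w := by
  nlinarith [mul_nonneg (sq_nonneg (φ' - v * φ)) hw,
    mul_nonpos_of_nonpos_of_nonneg hric (sq_nonneg φ)]

theorem intervalIntegral_mul_sq_le_of_riccati {φ φ' v v' w w' Q : ℝ → ℝ} {a b : ℝ}
    (hab : a ≤ b) (hφ : ContinuousOn φ (Icc a b)) (hv : ContinuousOn v (Icc a b))
    (hw : ContinuousOn w (Icc a b)) (hφ' : ∀ x ∈ Ioo a b, HasDerivAt φ (φ' x) x)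
    (hv' : ∀ x ∈ Ioo a b, HasDerivAt v (v' x) x) (hw' : ∀ x ∈ Ioo a b, HasDerivAt w (w' x) x)
    (hQint : IntervalIntegrable (fun x => Q x * φ x ^ 2 * w x) volume a b)
    (hφ'int : IntervalIntegrable (fun x => φ' x ^ 2 * w x) volume a b)
    (hw0 : ∀ x ∈ Ioo a b, 0 ≤ w x)
    (hric : ∀ x ∈ Ioo a b, (v' x + v x ^ 2 + Q x) * w x + v x * w' x ≤ 0)
    (ha : v a * w a ≤ 0) (hb : φ b = 0) :
    ∫ x in a..b, Q x * φ x ^ 2 * w x ≤ ∫ x in a..b, φ' x ^ 2 * w x := by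
  have hG := intervalIntegral.sub_le_integral_of_hasDeriv_right_of_le hab
    ((hv.mul (hφ.pow 2)).mul hw)
    (fun x hx => (((hv' x hx).mul ((hφ' x hx).pow 2)).mul (hw' x hx)).hasDerivWithinAt)
    ((intervalIntegrable_iff_integrableOn_Icc_of_le hab).1 (hφ'int.sub hQint))
    (fun x hx => by
      simpa using sq_mul_le_of_riccati (φ := φ x) (φ' := φ' x) (hw0 x hx) (hric x hx))
  rw [intervalIntegral.integral_sub hφ'int hQint] at hG
  have hGa : v a * φ a ^ 2 * w a ≤ 0 := by
    nlinarith [mul_nonpos_of_nonpos_of_nonneg ha (sq_nonneg (φ a))]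
  simp only [Pi.mul_apply, Pi.pow_apply, hb, zero_pow two_ne_zero, mul_zero, zero_mul] at hG
  linarith

theorem setIntegral_Ioi_eq_intervalIntegral_of_eq_zero {f : ℝ → ℝ} {a b : ℝ} (hab : a ≤ b)
    (hf : ∀ x, b < x → f x = 0) : ∫ x in Ioi a, f x = ∫ x in a..b, f x := by
  rw [intervalIntegral.integral_of_le hab]
  exact setIntegral_eq_of_subset_of_forall_sdiff_eq_zero measurableSet_Ioi Ioc_subset_Ioi_self
    fun x hx => hf x (by simpa [mem_Ioi.1 hx.1] using hx.2)

theorem hasDerivAt_derivWithin_Ici {φ : ℝ → ℝ} {a x : ℝ}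
    (hφ : DifferentiableOn ℝ φ (Ici a)) (hx : a < x) :
    HasDerivAt φ (derivWithin φ (Ici a) x) x := by
  rw [derivWithin_of_mem_nhds (Ici_mem_nhds hx)]
  exact ((hφ x hx.le).differentiableAt (Ici_mem_nhds hx)).hasDerivAt

theorem setIntegral_Ioi_mul_sq_le_of_riccati {φ v v' w w' Q : ℝ → ℝ} {a : ℝ}
    (hφ : ContDiffOn ℝ 1 φ (Ici a)) (hφ0 : ∃ R, ∀ x, R ≤ x → φ x = 0)
    (hv : ∀ x ∈ Ici a, HasDerivAt v (v' x) x) (hw : ∀ x ∈ Ici a, HasDerivAt w (w' x) x)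
    (hQ : ContinuousOn Q (Ici a)) (hw0 : ∀ x ∈ Ioi a, 0 ≤ w x)
    (hric : ∀ x ∈ Ioi a, (v' x + v x ^ 2 + Q x) * w x + v x * w' x ≤ 0)
    (ha : v a * w a ≤ 0) :
    ∫ x in Ioi a, Q x * φ x ^ 2 * w x ≤ ∫ x in Ioi a, deriv φ x ^ 2 * w x := by
  obtain ⟨R, hR⟩ := hφ0
  set b := max R a
  have hab : a ≤ b := le_max_right R a
  have hφb : ∀ x, b ≤ x → φ x = 0 := fun x hx => hR x (le_of_max_le_left hx)
  have hderiv : ∀ x ∈ Ioi a, HasDerivAt φ (derivWithin φ (Ici a) x) x := fun x hx =>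
    hasDerivAt_derivWithin_Ici (hφ.differentiableOn one_ne_zero) hx
  have hderiv_b : ∀ x, b < x → deriv φ x = 0 := fun x hx => by
    have hφ_nhds : φ =ᶠ[nhds x] fun _ => 0 :=
      Filter.eventually_of_mem (Ioi_mem_nhds hx) fun y hy => hφb y hy.le
    simp [hφ_nhds.deriv_eq]
  have hsub : Icc a b ⊆ Ici a := Icc_subset_Ici_self
  have hφc : ContinuousOn φ (Icc a b) := hφ.continuousOn.mono hsub
  have hφ'c : ContinuousOn (derivWithin φ (Ici a)) (Icc a b) :=
    (hφ.continuousOn_derivWithin (uniqueDiffOn_Ici a) le_rfl).mono hsub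
  have hwc : ContinuousOn w (Icc a b) := fun x hx =>
    (hw x (hsub hx)).continuousAt.continuousWithinAt
  have hrhs : ∫ x in Ioi a, deriv φ x ^ 2 * w x
      = ∫ x in a..b, derivWithin φ (Ici a) x ^ 2 * w x := by
    rw [setIntegral_Ioi_eq_intervalIntegral_of_eq_zero hab fun x hx => by simp [hderiv_b x hx]]
    refine intervalIntegral.integral_congr_ae (Filter.Eventually.of_forall fun x hx => ?_)
    rw [uIoc_of_le hab] at hx
    rw [(hderiv x hx.1).deriv]
  rw [hrhs, setIntegral_Ioi_eq_intervalIntegral_of_eq_zero hab fun x hx => by simp [hφb x hx.le]]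
  exact intervalIntegral_mul_sq_le_of_riccati hab hφc
    (fun x hx => (hv x (hsub hx)).continuousAt.continuousWithinAt) hwc
    (fun x hx => hderiv x hx.1) (fun x hx => hv x hx.1.le) (fun x hx => hw x hx.1.le)
    (((hQ.mono hsub).mul (hφc.pow 2)).mul hwc |>.intervalIntegrable_of_Icc hab)
    ((hφ'c.pow 2).mul hwc |>.intervalIntegrable_of_Icc hab)
    (fun x hx => hw0 x hx.1) (fun x hx => hric x hx.1) ha (hφb b le_rfl)

noncomputable def massRatio (k : ℕ) (m r : ℝ) : ℝ := m / (m + 2 * r ^ k)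

noncomputable def profile (k t : ℝ) : ℝ := (k - 1) * (t / 4 - 1 / 2) + 3 * t ^ 2 / 2

noncomputable def supersolution (k : ℕ) (m r : ℝ) : ℝ := profile k (massRatio k m r) / r

noncomputable def supersolutionDeriv (k : ℕ) (m r : ℝ) : ℝ :=
  (-(k * massRatio k m r * (1 - massRatio k m r) * ((k - 1) / 4 + 3 * massRatio k m r))
    - profile k (massRatio k m r)) / r ^ 2

theorem riccati_quartic_nonpos {f t : ℝ} (hf : 0 ≤ f) (ht0 : 0 ≤ t) (ht : t ≤ 1 / 2) :
    -t * (4 - 5 * t) * f ^ 2 + 2 * t * (2 - 25 * t + 30 * t ^ 2) * f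
      + (-4 + 40 * t - 135 * t ^ 2 + 108 * t ^ 3 + 36 * t ^ 4) ≤ 0 := by
  -- For `t ≤ 1/10` the terms in `f` are at most `8t/7`; for `t ≥ 1/10` they are nonpositive.
  have htf := mul_nonneg ht0 hf
  have htff := mul_nonneg htf hf
  rcases le_total t (1 / 10) with h | h
  · have hf_terms :
        -t * (4 - 5 * t) * f ^ 2 + 2 * t * (2 - 25 * t + 30 * t ^ 2) * f ≤ 8 / 7 * t := by
      nlinarith [mul_nonneg ht0 (sq_nonneg (f - 4 / 7)), mul_nonneg htf (sub_nonneg.2 h),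
        mul_nonneg htff (sub_nonneg.2 h), mul_nonneg htf ht0, mul_nonneg htff ht0]
    nlinarith [mul_nonneg ht0 (sub_nonneg.2 h), mul_nonneg (mul_nonneg ht0 ht0) (sub_nonneg.2 h)]
  · have hconst : -4 + 40 * t - 135 * t ^ 2 + 108 * t ^ 3 + 36 * t ^ 4 ≤ 0 := by
      nlinarith [mul_nonneg ht0 (sub_nonneg.2 ht), sq_nonneg (t - 1 / 5),
        mul_nonneg (mul_nonneg ht0 ht0) (sub_nonneg.2 ht)]
    nlinarith [mul_nonneg htf (sub_nonneg.2 ht), mul_nonneg htf (sub_nonneg.2 h),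
      mul_nonneg htff (sub_nonneg.2 ht),
      mul_nonneg (mul_nonneg hf (sub_nonneg.2 h)) (sub_nonneg.2 ht)]

theorem profile_riccati {k t : ℝ} (hk : 2 ≤ k) (ht0 : 0 ≤ t) (ht : t ≤ 1 / 2) :
    -(k * t * (1 - t) * ((k - 1) / 4 + 3 * t)) + profile k t ^ 2 + (k - 1) * profile k t
      + (k + 1) * t * (1 - t) + k * (k - 2) / 4 ≤ 0 := by
  have := riccati_quartic_nonpos (sub_nonneg.2 hk) ht0 ht
  unfold profile
  linear_combination this / 16

theorem profile_half_nonpos {k : ℝ} (hk : 2 ≤ k) : profile k (1 / 2) ≤ 0 := by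
  unfold profile; linarith

theorem hasDerivAt_profile (k t : ℝ) : HasDerivAt (profile k) ((k - 1) / 4 + 3 * t) t :=
  (((hasDerivAt_id' t).div_const 4).sub_const (1 / 2) |>.const_mul (k - 1) |>.add
    (((hasDerivAt_id' t).pow 2).const_mul 3 |>.div_const 2)).congr_deriv
      (by simp only [one_div, Nat.cast_ofNat, Nat.add_one_sub_one, pow_one, mul_one]; ring)

theorem natCast_mul_pow_sub_one (k : ℕ) {r : ℝ} (hr : r ≠ 0) :
    (k : ℝ) * r ^ (k - 1) = k * r ^ k / r := by
  rcases Nat.eq_zero_or_pos k with rfl | hk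
  · simp
  · rw [← pow_sub_one_mul hk.ne' r]; field_simp

theorem hasDerivAt_massRatio (k : ℕ) {m r : ℝ} (hr : r ≠ 0) (hA : m + 2 * r ^ k ≠ 0) :
    HasDerivAt (massRatio k m) (-(k * massRatio k m r * (1 - massRatio k m r)) / r) r := by
  refine ((hasDerivAt_const r m).div ((hasDerivAt_pow k r).const_mul 2 |>.const_add m)
    hA).congr_deriv ?_
  rw [natCast_mul_pow_sub_one k hr, massRatio]
  field_simp
  ring

theorem massRatio_nonneg {k : ℕ} {m r : ℝ} (hm : 0 < m) (hr : 0 < r) :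
    0 ≤ massRatio k m r := by
  unfold massRatio; positivity

theorem massRatio_le_half {k : ℕ} {m r : ℝ} (hm : 0 < m) (hhor : m ≤ 2 * r ^ k) :
    massRatio k m r ≤ 1 / 2 := by
  unfold massRatio; rw [div_le_iff₀ (by linarith)]; linarith

theorem schwarzPot_eq {k : ℕ} {m r : ℝ} (hr : r ≠ 0) (hA : m + 2 * r ^ k ≠ 0) :
    schwarzPot (k + 2) m r = (k + 1) * massRatio k m r * (1 - massRatio k m r) / r ^ 2 := by
  unfold schwarzPot massRatio
  simp only [Nat.add_sub_cancel, pow_add]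
  push_cast
  field_simp
  ring

theorem continuousAt_schwarzPot_sub_div_sq (n : ℕ) {m r : ℝ} (lam : ℝ) (hm : 0 < m)
    (hr : 0 < r) : ContinuousAt (fun r => schwarzPot n m r - lam / r ^ 2) r := by
  unfold schwarzPot
  fun_prop (disch := positivity)

theorem hasDerivAt_supersolution (k : ℕ) {m r : ℝ} (hm : 0 < m) (hr : 0 < r) :
    HasDerivAt (supersolution k m) (supersolutionDeriv k m r) r := by
  have hA : m + 2 * r ^ k ≠ 0 := by positivity
  refine (((hasDerivAt_profile k _).comp r (hasDerivAt_massRatio k hr.ne' hA)).div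
    (hasDerivAt_id' r) hr.ne').congr_deriv ?_
  rw [Function.comp_apply, supersolutionDeriv]
  field_simp

theorem supersolution_riccati {k : ℕ} {m lam r : ℝ} (hk : 2 ≤ k) (hm : 0 < m)
    (hlam : 0 ≤ 4 * lam + k * (k - 2)) (hr : 0 < r) (hhor : m ≤ 2 * r ^ k) :
    (supersolutionDeriv k m r + supersolution k m r ^ 2 + (schwarzPot (k + 2) m r - lam / r ^ 2))
      * r ^ k + supersolution k m r * (k * r ^ (k - 1)) ≤ 0 := by
  have hA : m + 2 * r ^ k ≠ 0 := by positivity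
  have hP := profile_riccati (k := k) (by exact_mod_cast hk) (massRatio_nonneg hm hr)
    (massRatio_le_half hm hhor)
  rw [schwarzPot_eq hr.ne' hA, natCast_mul_pow_sub_one k hr.ne']
  unfold supersolution supersolutionDeriv
  generalize massRatio k m r = t at hP ⊢
  have hlam4 : 0 ≤ (4 * lam + k * (k - 2)) / 4 := by positivity
  refine Eq.trans_le ?_ (mul_nonpos_of_nonpos_of_nonneg (sub_nonpos.2 (hP.trans hlam4))
    (by positivity : 0 ≤ r ^ k / r ^ 2))
  field_simp
  ring

theorem supersolution_nonpos_of_horizon {k : ℕ} {m r : ℝ} (hk : 2 ≤ k) (hr : 0 < r)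
    (hhor : 2 * r ^ k = m) : supersolution k m r ≤ 0 := by
  have hhalf : massRatio k m r = 1 / 2 := by
    rw [massRatio, ← hhor]; field_simp; ring
  rw [supersolution, hhalf]
  exact div_nonpos_of_nonpos_of_nonneg (profile_half_nonpos (by exact_mod_cast hk)) hr.le

/-- radial stability inequality: let `n ≥ 4`, `m > 0`,
`R₀ = (m/2)^(1/(n-2))` and `λ` with `4λ + (n-2)(n-4) ≥ 0`. Then for every continuously
differentiable `φ : [R₀,∞) → ℝ` with compact support,
`∫_{R₀}^∞ φ'(r)² r^(n-2) dr ≥ ∫_{R₀}^∞ (V(r) - λ/r²) φ(r)² r^(n-2) dr`. -/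
theorem radial_stability_inequality (n : ℕ) (hn : 4 ≤ n) (m : ℝ) (hm : 0 < m) (lam : ℝ)
    (hlam : 0 ≤ 4 * lam + ((n : ℝ) - 2) * ((n : ℝ) - 4)) :
    ∀ φ : ℝ → ℝ,
      ContDiffOn ℝ 1 φ (Set.Ici ((m / 2) ^ ((1 : ℝ) / ((n : ℝ) - 2)))) →
      (∃ R₁ : ℝ, ∀ r : ℝ, R₁ ≤ r → φ r = 0) →
      ∫ r in Set.Ioi ((m / 2) ^ ((1 : ℝ) / ((n : ℝ) - 2))),
          (schwarzPot n m r - lam / r ^ 2) * φ r ^ 2 * r ^ (n - 2)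
        ≤ ∫ r in Set.Ioi ((m / 2) ^ ((1 : ℝ) / ((n : ℝ) - 2))),
            deriv φ r ^ 2 * r ^ (n - 2) := by
  intro φ hφ hφ0
  obtain ⟨k, rfl⟩ : ∃ k, n = k + 2 := ⟨n - 2, by omega⟩
  have hk : 2 ≤ k := by omega
  have hlam' : 0 ≤ 4 * lam + k * (k - 2) := by push_cast at hlam; linarith
  rw [show ((k + 2 : ℕ) : ℝ) - 2 = k by push_cast; ring, one_div] at hφ ⊢
  simp only [Nat.add_sub_cancel]
  have hR₀k : 2 * ((m / 2) ^ (k : ℝ)⁻¹) ^ k = m := by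
    rw [rpow_inv_natCast_pow (by positivity) (by omega)]; ring
  set R₀ := (m / 2) ^ (k : ℝ)⁻¹
  have hR₀ : 0 < R₀ := by positivity
  have hhor : ∀ r ∈ Ioi R₀, m ≤ 2 * r ^ k := fun r hr => hR₀k ▸ by gcongr; exact hr.le
  refine setIntegral_Ioi_mul_sq_le_of_riccati hφ hφ0
    (fun r hr => hasDerivAt_supersolution k hm (hR₀.trans_le hr))
    (fun r _ => hasDerivAt_pow k r)
    (fun r hr => (continuousAt_schwarzPot_sub_div_sq _ lam hm (hR₀.trans_le hr)).continuousWithinAt)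
    (fun r hr => (pow_pos (hR₀.trans hr) k).le)
    (fun r hr => supersolution_riccati hk hm hlam' (hR₀.trans hr) (hhor r hr)) ?_
  exact mul_nonpos_of_nonpos_of_nonneg (supersolution_nonpos_of_horizon hk hR₀ hR₀k)
    (pow_pos hR₀ k).le
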